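/- Let g1 and g2 be finite labeled graphs in which every vertex and every edge carries the same label A, and let g be a solution of the graph ensemble problem for G = {g1, g2} with support threshold θ = 2, i.e., g is 2-supported by G and has the largest sum of vertex and edge supports among all graphs 2-supported by G. Then g is a common subgraph of g1 and g2 whose number of edges equals the Maximum Common Edge Subgraph value of g1 and g2; in particular, solving the graph ensemble problem on this instance solves the Maximum Common Edge Subgraph problem for g1 and g2. -/

import Mathlib

/-- A finite labeled graph: a finite vertex set `V ⊆ ℕ`, an edge set `E ⊆ V × V`,
and labeling functions for vertices and edges. -/
structure LGraph (L : Type*) where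
  V : Finset ℕ
  E : Finset (ℕ × ℕ)
  edge_mem : ∀ e ∈ E, e.1 ∈ V ∧ e.2 ∈ V
  lv : ℕ → L
  le : ℕ × ℕ → L

/-- A vertex matching between labeled graphs `g1` and `g2`: an injective partial
function from the vertices of `g1` to the vertices of `g2`. -/
structure VMatching {L : Type*} (g1 g2 : LGraph L) where
  f : ℕ → Option ℕ
  dom_sub : ∀ v w, f v = some w → v ∈ g1.V
  ran_sub : ∀ v w, f v = some w → w ∈ g2.V
  inj : ∀ v v' w, f v = some w → f v' = some w → v = v'

open Classical in
/-- Support `s_φ(v)` of a vertex `v` of `g1` under matching `φ`. -/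
noncomputable def vSupport {L : Type*} {g1 g2 : LGraph L} (φ : VMatching g1 g2) (v : ℕ) : ℕ :=
  match φ.f v with
  | some w => if g1.lv v = g2.lv w then 1 else 0
  | none => 0

open Classical in
/-- Support `s_φ(e)` of an edge `e` of `g1` under matching `φ`. -/
noncomputable def eSupport {L : Type*} {g1 g2 : LGraph L} (φ : VMatching g1 g2) (e : ℕ × ℕ) : ℕ :=
  match φ.f e.1, φ.f e.2 with
  | some w1, some w2 => if (w1, w2) ∈ g2.E ∧ g1.le e = g2.le (w1, w2) then 1 else 0
  | _, _ => 0

/-- Total support of a matching: `Σ_{v ∈ V1} s_φ(v) + Σ_{e ∈ E1} s_φ(e)`. -/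
noncomputable def totalSupport {L : Type*} {g1 g2 : LGraph L} (φ : VMatching g1 g2) : ℕ :=
  (∑ v ∈ g1.V, vSupport φ v) + (∑ e ∈ g1.E, eSupport φ e)

/-- A best vertex match maximizes total support over all matchings. -/
def IsBestMatch {L : Type*} {g1 g2 : LGraph L} (φ : VMatching g1 g2) : Prop :=
  ∀ ψ : VMatching g1 g2, totalSupport ψ ≤ totalSupport φ

/-- A label-preserving injective homomorphism from `g` into `h`. -/
def IsHom {L : Type*} (g h : LGraph L) (ψ : ℕ → ℕ) : Prop :=
  Set.InjOn ψ ↑g.V ∧ (∀ v ∈ g.V, ψ v ∈ h.V) ∧ (∀ v ∈ g.V, g.lv v = h.lv (ψ v)) ∧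
  (∀ e ∈ g.E, (ψ e.1, ψ e.2) ∈ h.E ∧ g.le e = h.le (ψ e.1, ψ e.2))

/-- `g` is a common subgraph of `g1` and `g2`. -/
def IsCommonSubgraph {L : Type*} (g g1 g2 : LGraph L) : Prop :=
  ∃ ψ1 ψ2 : ℕ → ℕ, IsHom g g1 ψ1 ∧ IsHom g g2 ψ2

/-- Every vertex and edge of `g` carries the label `A`. -/
def AllLabel {L : Type*} (g : LGraph L) (A : L) : Prop :=
  (∀ v ∈ g.V, g.lv v = A) ∧ (∀ e ∈ g.E, g.le e = A)

/-- `g` is `θ`-supported by the collection `{g1, g2}`: there are best vertex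
matches from `g` to `g1` and `g2` under which every vertex and edge of `g`
has support at least `θ`. -/
def ThetaSupported2 {L : Type*} (g g1 g2 : LGraph L) (θ : ℕ) : Prop :=
  ∃ φ1 : VMatching g g1, ∃ φ2 : VMatching g g2,
    IsBestMatch φ1 ∧ IsBestMatch φ2 ∧
    (∀ v ∈ g.V, θ ≤ vSupport φ1 v + vSupport φ2 v) ∧
    (∀ e ∈ g.E, θ ≤ eSupport φ1 e + eSupport φ2 e)

/-- The total support of `g` with respect to `h` under a best vertex match
(the maximal achievable total support). -/
noncomputable def bestSupport {L : Type*} (g h : LGraph L) : ℕ :=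
  sSup {n | ∃ φ : VMatching g h, totalSupport φ = n}

/-!
A single matching supports a vertex or an edge at most once, so with two graphs and threshold `2`
both best matches must support every vertex and edge of `g`, i.e. be label-preserving injective
homomorphisms. Hence the `2`-supported graphs are exactly the common subgraphs of `g1` and `g2`,
and such a graph `h` has best support `|V h| + |E h|` towards each of them. When all labels agree,
any common subgraph can be padded with isolated vertices up to `min |V1| |V2|` vertices, a bound
that `g` obeys as well, so maximality of the support sum of `g` bounds every common edge count.
-/

section

variable {L : Type*}

section Matching

variable {g h : LGraph L} (φ : VMatching g h)

lemma vSupport_le_one (v : ℕ) : vSupport φ v ≤ 1 := by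
  unfold vSupport
  split
  · split_ifs <;> simp
  · simp

lemma eSupport_le_one (e : ℕ × ℕ) : eSupport φ e ≤ 1 := by
  unfold eSupport
  split
  · split_ifs <;> simp
  · simp

lemma vSupport_eq_one_iff {v : ℕ} :
    vSupport φ v = 1 ↔ ∃ w, φ.f v = some w ∧ g.lv v = h.lv w := by
  unfold vSupport
  cases φ.f v <;> simp

lemma eSupport_eq_one_iff {e : ℕ × ℕ} :
    eSupport φ e = 1 ↔ ∃ w₁ w₂, φ.f e.1 = some w₁ ∧ φ.f e.2 = some w₂ ∧
      (w₁, w₂) ∈ h.E ∧ g.le e = h.le (w₁, w₂) := by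
  unfold eSupport
  cases φ.f e.1 <;> cases φ.f e.2 <;> simp

lemma totalSupport_le : totalSupport φ ≤ g.V.card + g.E.card := by
  have hV : ∑ v ∈ g.V, vSupport φ v ≤ g.V.card := by
    simpa using Finset.sum_le_card_nsmul _ _ 1 fun v _ => vSupport_le_one φ v
  have hE : ∑ e ∈ g.E, eSupport φ e ≤ g.E.card := by
    simpa using Finset.sum_le_card_nsmul _ _ 1 fun e _ => eSupport_le_one φ e
  exact add_le_add hV hE

lemma bestSupport_eq_of_isBestMatch (hφ : IsBestMatch φ) : bestSupport g h = totalSupport φ :=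
  IsGreatest.csSup_eq ⟨⟨φ, rfl⟩, by rintro _ ⟨ψ, rfl⟩; exact hφ ψ⟩

def VMatching.IsPerfect : Prop :=
  (∀ v ∈ g.V, vSupport φ v = 1) ∧ ∀ e ∈ g.E, eSupport φ e = 1

variable {φ}

lemma VMatching.IsPerfect.totalSupport_eq (hφ : φ.IsPerfect) :
    totalSupport φ = g.V.card + g.E.card := by
  simp [totalSupport, Finset.sum_congr rfl hφ.1, Finset.sum_congr rfl hφ.2]

lemma VMatching.IsPerfect.isBestMatch (hφ : φ.IsPerfect) : IsBestMatch φ :=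
  fun ψ => hφ.totalSupport_eq ▸ totalSupport_le ψ

lemma VMatching.IsPerfect.bestSupport_eq (hφ : φ.IsPerfect) :
    bestSupport g h = g.V.card + g.E.card :=
  (bestSupport_eq_of_isBestMatch φ hφ.isBestMatch).trans hφ.totalSupport_eq

lemma VMatching.IsPerfect.isHom (hφ : φ.IsPerfect) : IsHom g h fun v => (φ.f v).getD 0 := by
  have hv := fun v hv => (vSupport_eq_one_iff φ).1 (hφ.1 v hv)
  refine ⟨fun v hv₁ v' hv₂ hvv' => ?_, fun v hv' => ?_, fun v hv' => ?_, fun e he => ?_⟩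
  · obtain ⟨w, hw, -⟩ := hv v hv₁
    obtain ⟨w', hw', -⟩ := hv v' hv₂
    simp only [hw, hw', Option.getD_some] at hvv'
    exact φ.inj v v' w hw (hvv' ▸ hw')
  · obtain ⟨w, hw, -⟩ := hv v hv'
    simpa [hw] using φ.ran_sub v w hw
  · obtain ⟨w, hw, hl⟩ := hv v hv'
    simpa [hw] using hl
  · obtain ⟨w₁, w₂, hw₁, hw₂, hE, hl⟩ := (eSupport_eq_one_iff φ).1 (hφ.2 e he)
    simpa [hw₁, hw₂] using ⟨hE, hl⟩

end Matching

section Hom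

variable {g h : LGraph L} {ψ : ℕ → ℕ}

lemma IsHom.card_V_le (hψ : IsHom g h ψ) : g.V.card ≤ h.V.card :=
  Finset.card_le_card_of_injOn ψ hψ.2.1 hψ.1

def IsHom.toVMatching (hψ : IsHom g h ψ) : VMatching g h where
  f v := if v ∈ g.V then some (ψ v) else none
  dom_sub v w hv := by
    by_contra hv'
    simp [hv'] at hv
  ran_sub v w hv := by
    split_ifs at hv with hv'
    exact Option.some_injective _ hv ▸ hψ.2.1 v hv'
  inj v v' w hv hv' := by
    split_ifs at hv hv' with h₁ h₂
    exact hψ.1 h₁ h₂ (Option.some_injective _ (hv.trans hv'.symm))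

lemma IsHom.toVMatching_f (hψ : IsHom g h ψ) {v : ℕ} (hv : v ∈ g.V) :
    hψ.toVMatching.f v = some (ψ v) :=
  if_pos hv

lemma IsHom.isPerfect_toVMatching (hψ : IsHom g h ψ) : hψ.toVMatching.IsPerfect := by
  refine ⟨fun v hv => ?_, fun e he => ?_⟩
  · exact (vSupport_eq_one_iff _).2 ⟨ψ v, hψ.toVMatching_f hv, hψ.2.2.1 v hv⟩
  · have ⟨he₁, he₂⟩ := g.edge_mem e he
    exact (eSupport_eq_one_iff _).2 ⟨ψ e.1, ψ e.2, hψ.toVMatching_f he₁, hψ.toVMatching_f he₂,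
      hψ.2.2.2 e he⟩

lemma IsHom.bestSupport_eq (hψ : IsHom g h ψ) : bestSupport g h = g.V.card + g.E.card :=
  hψ.isPerfect_toVMatching.bestSupport_eq

end Hom

theorem thetaSupported2_two_iff {g g1 g2 : LGraph L} :
    ThetaSupported2 g g1 g2 2 ↔ IsCommonSubgraph g g1 g2 := by
  constructor
  · rintro ⟨φ₁, φ₂, -, -, hv, he⟩
    have hv' : ∀ v ∈ g.V, vSupport φ₁ v = 1 ∧ vSupport φ₂ v = 1 := fun v hv' => by
      have := hv v hv'; have := vSupport_le_one φ₁ v; have := vSupport_le_one φ₂ v; omega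
    have he' : ∀ e ∈ g.E, eSupport φ₁ e = 1 ∧ eSupport φ₂ e = 1 := fun e he' => by
      have := he e he'; have := eSupport_le_one φ₁ e; have := eSupport_le_one φ₂ e; omega
    have hφ₁ : φ₁.IsPerfect := ⟨fun v hv => (hv' v hv).1, fun e he => (he' e he).1⟩
    have hφ₂ : φ₂.IsPerfect := ⟨fun v hv => (hv' v hv).2, fun e he => (he' e he).2⟩
    exact ⟨_, _, hφ₁.isHom, hφ₂.isHom⟩
  · rintro ⟨ψ₁, ψ₂, hψ₁, hψ₂⟩
    have hφ₁ := hψ₁.isPerfect_toVMatching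
    have hφ₂ := hψ₂.isPerfect_toVMatching
    exact ⟨_, _, hφ₁.isBestMatch, hφ₂.isBestMatch, fun v hv => by rw [hφ₁.1 v hv, hφ₂.1 v hv],
      fun e he => by rw [hφ₁.2 e he, hφ₂.2 e he]⟩

theorem Set.InjOn.exists_extension_of_card_le {α β : Type*} [DecidableEq α] [DecidableEq β]
    {s s' : Finset α} {t : Finset β} {f : α → β} (hf : Set.InjOn f s) (hft : Set.MapsTo f s t)
    (hss' : s ⊆ s') (hcard : s'.card ≤ t.card) :
    ∃ f' : α → β, Set.InjOn f' s' ∧ Set.MapsTo f' s' t ∧ Set.EqOn f' f s := by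
  rcases isEmpty_or_nonempty β with hβ | hβ
  · have : s' = ∅ := Finset.card_eq_zero.1 (by simpa [Finset.eq_empty_of_isEmpty t] using hcard)
    exact ⟨f, by simp [this], by simp [this, Set.mapsTo_empty], Set.eqOn_refl _ _⟩
  set u := s' \ s
  set w := t \ s.image f
  have huw : u.card ≤ w.card := by
    rw [Finset.card_sdiff_of_subset hss',
      Finset.card_sdiff_of_subset (Finset.image_subset_iff.2 hft), Finset.card_image_of_injOn hf]
    have := Finset.card_le_card hss'
    omega
  obtain ⟨f₀, hf₀w, hf₀⟩ := u.finite_toSet.exists_injOn_of_encard_le (t := (w : Set β))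
    (by simpa [Set.encard_coe_eq_coe_finsetCard] using huw)
  have hEq : Set.EqOn (u.piecewise f₀ f) f s := fun x hx =>
    Finset.piecewise_eq_of_notMem _ _ _ fun hxu => (Finset.mem_sdiff.1 hxu).2 hx
  have hEq₀ : Set.EqOn (u.piecewise f₀ f) f₀ u := fun x hx => Finset.piecewise_eq_of_mem _ _ _ hx
  have hs' : (s' : Set α) = (s : Set α) ∪ (u : Set α) := by
    rw [← Finset.coe_union, Finset.union_sdiff_of_subset hss']
  refine ⟨u.piecewise f₀ f, ?_, ?_, hEq⟩
  · rw [hs', Set.injOn_union (Finset.disjoint_coe.2 Finset.disjoint_sdiff)]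
    refine ⟨hf.congr hEq.symm, hf₀.congr hEq₀.symm, fun x hx y hy hxy => ?_⟩
    rw [hEq hx, hEq₀ hy] at hxy
    exact (Finset.mem_sdiff.1 (hf₀w hy)).2 (hxy ▸ Finset.mem_image_of_mem f hx)
  · rw [hs']
    rintro x (hx | hx)
    · exact hEq hx ▸ hft hx
    · exact hEq₀ hx ▸ (Finset.mem_sdiff.1 (hf₀w hx)).1

def LGraph.padTo (h : LGraph L) (V' : Finset ℕ) (hV : h.V ⊆ V') (A : L) : LGraph L where
  V := V'
  E := h.E
  edge_mem e he := ⟨hV (h.edge_mem e he).1, hV (h.edge_mem e he).2⟩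
  lv _ := A
  le := h.le

lemma IsHom.exists_isHom_padTo {h k : LGraph L} {ψ : ℕ → ℕ} (hψ : IsHom h k ψ) {V' : Finset ℕ}
    (hV : h.V ⊆ V') (hcard : V'.card ≤ k.V.card) {A : L} (hk : ∀ v ∈ k.V, k.lv v = A) :
    ∃ f, IsHom (h.padTo V' hV A) k f := by
  obtain ⟨f, hf, hfk, hfψ⟩ := hψ.1.exists_extension_of_card_le hψ.2.1 hV hcard
  refine ⟨f, hf, hfk, fun v hv => (hk _ (hfk hv)).symm, fun e he => ?_⟩
  have ⟨he₁, he₂⟩ := h.edge_mem e he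
  rw [hfψ he₁, hfψ he₂]
  exact hψ.2.2.2 e he

lemma IsCommonSubgraph.exists_card_V_eq_min {h g1 g2 : LGraph L} (hh : IsCommonSubgraph h g1 g2)
    {A : L} (hA1 : ∀ v ∈ g1.V, g1.lv v = A) (hA2 : ∀ v ∈ g2.V, g2.lv v = A) :
    ∃ h' : LGraph L, IsCommonSubgraph h' g1 g2 ∧ h'.E = h.E ∧
      h'.V.card = min g1.V.card g2.V.card := by
  obtain ⟨ψ₁, ψ₂, hψ₁, hψ₂⟩ := hh
  obtain ⟨V', hV, hV'⟩ := Infinite.exists_superset_card_eq h.V (min g1.V.card g2.V.card)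
    (le_min hψ₁.card_V_le hψ₂.card_V_le)
  obtain ⟨f₁, hf₁⟩ := hψ₁.exists_isHom_padTo hV (hV' ▸ min_le_left _ _) hA1
  obtain ⟨f₂, hf₂⟩ := hψ₂.exists_isHom_padTo hV (hV' ▸ min_le_right _ _) hA2
  exact ⟨h.padTo V' hV A, ⟨f₁, f₂, hf₁, hf₂⟩, rfl, hV'⟩

end

/-- if all labels of `g1` and `g2` equal `A` and `g` solves the
graph ensemble problem for `G = {g1, g2}` with threshold `θ = 2` (i.e. `g` is
2-supported by `G` and maximizes the sum of vertex and edge supports among all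
graphs 2-supported by `G`), then `g` is a common subgraph of `g1` and `g2`
whose number of edges is the Maximum Common Edge Subgraph value of `g1`, `g2`. -/
theorem ensemble_solution_solves_mces {L : Type*} (A : L) (g g1 g2 : LGraph L)
    (h1 : AllLabel g1 A) (h2 : AllLabel g2 A)
    (hsupp : ThetaSupported2 g g1 g2 2)
    (hmax : ∀ g' : LGraph L, ThetaSupported2 g' g1 g2 2 →
      bestSupport g' g1 + bestSupport g' g2 ≤ bestSupport g g1 + bestSupport g g2) :
    IsCommonSubgraph g g1 g2 ∧
    IsGreatest {n | ∃ h : LGraph L, IsCommonSubgraph h g1 g2 ∧ h.E.card = n}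
      g.E.card := by
  have hg := thetaSupported2_two_iff.1 hsupp
  have ⟨ψ₁, ψ₂, hψ₁, hψ₂⟩ := hg
  refine ⟨hg, ⟨g, hg, rfl⟩, ?_⟩
  rintro _ ⟨h, hh, rfl⟩
  obtain ⟨h', hh', hE, hV⟩ := hh.exists_card_V_eq_min h1.1 h2.1
  have ⟨χ₁, χ₂, hχ₁, hχ₂⟩ := hh'
  have hle := hmax h' (thetaSupported2_two_iff.2 hh')
  rw [hχ₁.bestSupport_eq, hχ₂.bestSupport_eq, hψ₁.bestSupport_eq, hψ₂.bestSupport_eq, hE, hV]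
    at hle
  have := le_min hψ₁.card_V_le hψ₂.card_V_le
  omega
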